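/- Let Θ and X be finite nonempty sets, u : X × Θ → ℝ, and let x : Θ → Δ(X) be a cyclically monotone social choice function. Fix a quota q ∈ Δ(Θ) and an integer K ≥ 1, and fix a type vector θ = (θ^1,…,θ^K) ∈ Θ^K. Then there exists a feasible report vector r = (r^1,…,r^K) at quota q that maximizes the payoff (1/K)·Σ_k ū(x(r^k),θ^k) among all feasible report vectors at quota q, and that satisfies (1/K)·Σ_{k=1}^K ‖x(r^k) − x(θ^k)‖ ≤ (|Θ| − 1)·‖q − marg θ‖. -/

import Mathlib

open Finset

/-- `p` is a probability vector on the finite set `Z`. -/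
def IsProbVec {Z : Type*} [Fintype Z] (p : Z → ℝ) : Prop :=
  (∀ z, 0 ≤ p z) ∧ ∑ z, p z = 1

/-- Total variation distance `‖p − q‖ = (1/2)·Σ_z |p z − q z|`. -/
noncomputable def tv {Z : Type*} [Fintype Z] (p q : Z → ℝ) : ℝ :=
  (∑ z, |p z - q z|) / 2

/-- Lifted utility: `ū(μ,θ) = Σ_a μ(a)·u(a,θ)` for a lottery `μ ∈ Δ(X)`. -/
noncomputable def ubar {Θ X : Type*} [Fintype X]
    (u : X × Θ → ℝ) (μ : X → ℝ) (θ : Θ) : ℝ :=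
  ∑ a, μ a * u (a, θ)

/-- Linear extension of the social choice function `x : Θ → Δ(X)` to `Δ(Θ)`:
`x(r) = Σ_{θ'} r(θ')·x(θ')`. -/
noncomputable def liftSCF {Θ X : Type*} [Fintype Θ]
    (x : Θ → X → ℝ) (r : Θ → ℝ) : X → ℝ :=
  fun a => ∑ θ', r θ' * x θ' a

/-- `x : Θ → Δ(X)` is cyclically monotone for the utility `u`. -/
def CyclMonoSCF {Θ X : Type*} [Fintype X] (u : X × Θ → ℝ) (x : Θ → X → ℝ) : Prop :=
  ∀ J : ℕ, ∀ θs : Fin (J + 2) → Θ, Function.Injective θs →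
    ∑ j, ubar u (x (θs (j + 1))) (θs j) ≤ ∑ j, ubar u (x (θs j)) (θs j)

/-- `r = (r^1,…,r^K)` is a feasible report vector at quota `q`:
each `r^k ∈ Δ(Θ)` and `(1/K)·Σ_k r^k = q`. -/
def Feasible {Θ : Type*} [Fintype Θ] (K : ℕ) (q : Θ → ℝ)
    (r : Fin K → Θ → ℝ) : Prop :=
  (∀ k, IsProbVec (r k)) ∧ ∀ θ', (∑ k, r k θ') / K = q θ'

/-- Payoff of the report vector `r` at the type vector `θv`:
`(1/K)·Σ_k ū(x(r^k),θ^k)`. -/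
noncomputable def payoff {Θ X : Type*} [Fintype Θ] [Fintype X]
    (u : X × Θ → ℝ) (x : Θ → X → ℝ) (K : ℕ)
    (θv : Fin K → Θ) (r : Fin K → Θ → ℝ) : ℝ :=
  (∑ k, ubar u (liftSCF x (r k)) (θv k)) / K

/-- Empirical distribution of a type vector: `(marg θ)(θ') = |{k : θ^k = θ'}|/K`. -/
noncomputable def marg {Θ : Type*} [Fintype Θ] [DecidableEq Θ] (K : ℕ)
    (θv : Fin K → Θ) : Θ → ℝ :=
  fun θ' => ((Finset.univ.filter (fun k => θv k = θ')).card : ℝ) / K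

/-!
Grouping the agents by type, a report vector that is feasible at quota `q` is the same thing as
a coupling `γ` of the empirical type distribution `marg θ` with `q`, and its payoff is the surplus
`∑ s t, γ s t * ū(x t, s)`. Take a surplus-maximizing coupling whose diagonal mass is maximal among
all such couplings. Shifting mass from a cycle of its off-diagonal support onto the diagonal would
keep both marginals, would not lower the surplus (cyclic monotonicity), and would raise the
diagonal mass; so that support is acyclic and its vertices carry a rank `ρ < |Θ|` that increases
along every off-diagonal edge. Hence the off-diagonal mass is at most
`∑ s t, γ s t * (ρ t - ρ s) = ∑ s, (q s - marg θ s) * ρ s ≤ (|Θ| - 1) * ‖q - marg θ‖`,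
while an agent of type `θᵏ` reporting `rᵏ` has decision error at most `1 - rᵏ(θᵏ)`.
-/

theorem tv_le_one {Z : Type*} [Fintype Z] {p q : Z → ℝ} (hp : IsProbVec p) (hq : IsProbVec q) :
    tv p q ≤ 1 := by
  have h : ∑ z, |p z - q z| ≤ ∑ z, (p z + q z) := Finset.sum_le_sum fun z _ =>
    (abs_sub _ _).trans_eq (by rw [abs_of_nonneg (hp.1 z), abs_of_nonneg (hq.1 z)])
  rw [Finset.sum_add_distrib, hp.2, hq.2] at h
  rw [tv]
  linarith

theorem tv_eq_sum_max_sub {Z : Type*} [Fintype Z] {p q : Z → ℝ} (h : ∑ z, p z = ∑ z, q z) :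
    tv p q = ∑ z, max (p z - q z) 0 := by
  have hmax : ∀ z, max (p z - q z) 0 = ((p z - q z) + |p z - q z|) / 2 := by
    intro z
    rcases le_total 0 (p z - q z) with hz | hz
    · rw [max_eq_left hz, abs_of_nonneg hz]; ring
    · rw [max_eq_right hz, abs_of_nonpos hz]; ring
  rw [Finset.sum_congr rfl fun z _ => hmax z, ← Finset.sum_div, Finset.sum_add_distrib,
    Finset.sum_sub_distrib, h, sub_self, zero_add, tv]

section Cycles

variable {α : Type*}

theorem Relation.TransGen.exists_walk {R : α → α → Prop} {a b : α} (h : Relation.TransGen R a b) :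
    ∃ n, 0 < n ∧ ∃ f : ℕ → α, f 0 = a ∧ f n = b ∧ ∀ i < n, R (f i) (f (i + 1)) := by
  induction h with
  | @single b hab => exact ⟨1, one_pos, fun i => if i = 0 then a else b, rfl, rfl, by simpa⟩
  | @tail b c _ hbc ih =>
    obtain ⟨n, -, f, hf0, hfn, hf⟩ := ih
    refine ⟨n + 1, n.succ_pos, fun i => if i = n + 1 then c else f i, by simpa, by simp, ?_⟩
    intro i hi
    rcases (Nat.lt_succ_iff.1 hi).lt_or_eq with hi | rfl
    · simpa [show i ≠ n + 1 by omega, show i ≠ n by omega] using hf i hi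
    · simpa [hfn] using hbc

/-- A closed walk of minimal length visits no vertex twice. -/
theorem Relation.TransGen.exists_injective_cycle {R : α → α → Prop} (hR : ∀ a, ¬ R a a) {a : α}
    (h : Relation.TransGen R a a) :
    ∃ (J : ℕ) (g : Fin (J + 2) → α), Function.Injective g ∧ ∀ j, R (g j) (g (j + 1)) := by
  classical
  let IsClosedWalk (n : ℕ) (f : ℕ → α) : Prop := f n = f 0 ∧ ∀ i < n, R (f i) (f (i + 1))
  have hex : ∃ n, 0 < n ∧ ∃ f, IsClosedWalk n f := by
    obtain ⟨n, hn, f, hf0, hfn, hf⟩ := h.exists_walk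
    exact ⟨n, hn, f, hfn.trans hf0.symm, hf⟩
  obtain ⟨hpos, f, hclosed, hstep⟩ := Nat.find_spec hex
  set n := Nat.find hex
  have hinj : ∀ i j, i < j → j < n → f i ≠ f j := by
    intro i j hij hjn hfij
    refine Nat.find_min hex (show j - i < n by omega) ⟨by omega, fun t => f (i + t), ?_, ?_⟩
    · simpa [Nat.add_sub_cancel' hij.le] using hfij.symm
    · intro t ht
      simpa [Nat.add_assoc] using hstep (i + t) (by omega)
  obtain ⟨J, hJ⟩ : ∃ J, n = J + 2 := by
    refine ⟨n - 2, ?_⟩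
    have : n ≠ 1 := fun h1 => by
      have h01 := hstep 0 (by omega)
      rw [zero_add, ← h1, hclosed] at h01
      exact hR _ h01
    omega
  refine ⟨J, fun j => f j, fun i j hij => ?_, fun j => ?_⟩
  · by_contra hne
    rcases Fin.lt_or_lt_of_ne hne with hlt | hlt
    · exact hinj i j hlt (by omega) hij
    · exact hinj j i hlt (by omega) hij.symm
  · show R (f j) (f ↑(j + 1))
    rw [Fin.val_add_one]
    split_ifs with hj
    · simpa [hj, ← hJ, hclosed] using hstep j (by omega)
    · exact hstep j (by omega)

/-- Counting predecessors in the transitive closure ranks the vertices of an acyclic relation. -/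
theorem exists_rank_of_acyclic [Fintype α] {R : α → α → Prop}
    (hR : ∀ a, ¬ Relation.TransGen R a a) :
    ∃ ρ : α → ℕ, (∀ s t, R s t → ρ s < ρ t) ∧ ∀ s, ρ s < Fintype.card α := by
  classical
  refine ⟨fun s => #{t | Relation.TransGen R t s}, fun s t hst => ?_, fun s => ?_⟩
  · refine Finset.card_lt_card ⟨fun v hv => ?_, fun hsub => hR s ?_⟩
    · simp only [Finset.mem_filter, Finset.mem_univ, true_and] at hv ⊢
      exact hv.tail hst
    · simpa using hsub (by simpa using Relation.TransGen.single hst)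
  · exact Finset.card_lt_univ_of_notMem (x := s) (by simpa using hR s)

end Cycles

theorem IsCompact.exists_isMaxOn_lex {α β γ : Type*} [TopologicalSpace α]
    [LinearOrder β] [TopologicalSpace β] [OrderClosedTopology β]
    [LinearOrder γ] [TopologicalSpace γ] [OrderClosedTopology γ]
    {S : Set α} (hS : IsCompact S) (hne : S.Nonempty) {f : α → β} {g : α → γ}
    (hf : Continuous f) (hg : Continuous g) :
    ∃ a ∈ S, IsMaxOn f S a ∧ ∀ b ∈ S, f a ≤ f b → g b ≤ g a := by
  obtain ⟨a₀, ha₀, hfa₀⟩ := hS.exists_isMaxOn hne hf.continuousOn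
  have hT : IsCompact (S ∩ {b | f a₀ ≤ f b}) := hS.inter_right (isClosed_le continuous_const hf)
  obtain ⟨a, ⟨haS, ha⟩, hga⟩ := hT.exists_isMaxOn ⟨a₀, ha₀, le_rfl⟩ hg.continuousOn
  refine ⟨a, haS, fun b hb => (hfa₀ hb).trans ha, fun b hb _ => hga ⟨hb, ha.trans ‹_›⟩⟩

section Coupling

variable {Θ : Type*} [Fintype Θ]

structure IsCoupling (m q : Θ → ℝ) (γ : Θ → Θ → ℝ) : Prop where
  nonneg : ∀ s t, 0 ≤ γ s t
  sum_row : ∀ s, ∑ t, γ s t = m s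
  sum_col : ∀ t, ∑ s, γ s t = q t

def transportValue (c γ : Θ → Θ → ℝ) : ℝ :=
  ∑ s, ∑ t, γ s t * c s t

/-- `CyclMonoSCF u x` is this condition for `c s t = ubar u (x t) s`. -/
def DiagCyclicallyMonotone (c : Θ → Θ → ℝ) : Prop :=
  ∀ (J : ℕ) (g : Fin (J + 2) → Θ), Function.Injective g →
    ∑ j, c (g j) (g (j + 1)) ≤ ∑ j, c (g j) (g j)

variable {m q : Θ → ℝ} {γ : Θ → Θ → ℝ}

theorem IsCoupling.le_left (hγ : IsCoupling m q γ) (s t : Θ) : γ s t ≤ m s :=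
  hγ.sum_row s ▸ Finset.single_le_sum (fun t _ => hγ.nonneg s t) (Finset.mem_univ t)

theorem IsCoupling.eq_zero_of_left_eq_zero (hγ : IsCoupling m q γ) {s : Θ} (hs : m s = 0)
    (t : Θ) : γ s t = 0 :=
  le_antisymm (hs ▸ hγ.le_left s t) (hγ.nonneg s t)

theorem isCoupling_mul (hm : IsProbVec m) (hq : IsProbVec q) :
    IsCoupling m q (fun s t => m s * q t) where
  nonneg s t := mul_nonneg (hm.1 s) (hq.1 t)
  sum_row s := by rw [← Finset.mul_sum, hq.2, mul_one]
  sum_col t := by rw [← Finset.sum_mul, hm.2, one_mul]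

theorem isCompact_setOf_isCoupling (m q : Θ → ℝ) : IsCompact {γ | IsCoupling m q γ} := by
  have hclosed : IsClosed {γ | IsCoupling m q γ} := by
    have : {γ | IsCoupling m q γ} = (⋂ s, ⋂ t, {γ | 0 ≤ γ s t}) ∩
        ((⋂ s, {γ | ∑ t, γ s t = m s}) ∩ ⋂ t, {γ | ∑ s, γ s t = q t}) := by
      ext γ
      simp only [Set.mem_ofPred_eq, Set.mem_inter_iff, Set.mem_iInter]
      exact ⟨fun h => ⟨h.1, h.2, h.3⟩, fun h => ⟨h.1, h.2.1, h.2.2⟩⟩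
    rw [this]
    refine .inter (isClosed_iInter fun s => isClosed_iInter fun t =>
      isClosed_le continuous_const (by fun_prop)) (.inter (isClosed_iInter fun s => ?_)
      (isClosed_iInter fun t => ?_))
    all_goals exact isClosed_eq (by fun_prop) continuous_const
  refine (isCompact_univ_pi fun s => isCompact_univ_pi fun _ => isCompact_Icc (a := 0)
    (b := m s)).of_isClosed_subset hclosed fun γ hγ => ?_
  exact Set.mem_univ_pi.2 fun s => Set.mem_univ_pi.2 fun t => ⟨hγ.nonneg s t, hγ.le_left s t⟩

theorem continuous_transportValue (c : Θ → Θ → ℝ) : Continuous (transportValue c) := by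
  unfold transportValue
  fun_prop

theorem exists_isCoupling_isMaxOn_lex (c : Θ → Θ → ℝ) (hm : IsProbVec m) (hq : IsProbVec q) :
    ∃ γ, IsCoupling m q γ ∧ (∀ γ', IsCoupling m q γ' → transportValue c γ' ≤ transportValue c γ) ∧
      ∀ γ', IsCoupling m q γ' → transportValue c γ ≤ transportValue c γ' →
        ∑ s, γ' s s ≤ ∑ s, γ s s := by
  obtain ⟨γ, hγ, hmax, hlex⟩ := (isCompact_setOf_isCoupling m q).exists_isMaxOn_lex
    ⟨_, isCoupling_mul hm hq⟩ (continuous_transportValue c)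
    (g := fun γ : Θ → Θ → ℝ => ∑ s, γ s s) (by fun_prop)
  exact ⟨γ, hγ, fun γ' hγ' => hmax hγ', hlex⟩

end Coupling

section CycleExchange

variable {Θ : Type*} [DecidableEq Θ] {J : ℕ}

def cycleShift (g : Fin (J + 2) → Θ) (s t : Θ) : ℝ :=
  ∑ j, ((if g j = s ∧ g j = t then 1 else 0) - if g j = s ∧ g (j + 1) = t then 1 else 0)

theorem sum_cycleShift_row [Fintype Θ] (g : Fin (J + 2) → Θ) (s : Θ) :
    ∑ t, cycleShift g s t = 0 := by
  simp only [cycleShift]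
  rw [Finset.sum_comm]
  simp [ite_and, Finset.sum_sub_distrib]

theorem sum_cycleShift_col [Fintype Θ] (g : Fin (J + 2) → Θ) (t : Θ) :
    ∑ s, cycleShift g s t = 0 := by
  simp only [cycleShift]
  rw [Finset.sum_comm]
  simp only [Finset.sum_sub_distrib, ite_and, Finset.sum_ite_eq, Finset.mem_univ, if_true]
  rw [sub_eq_zero]
  exact (Equiv.sum_comp (Equiv.addRight 1) fun j => if g j = t then (1 : ℝ) else 0).symm

theorem transportValue_cycleShift [Fintype Θ] (c : Θ → Θ → ℝ) (g : Fin (J + 2) → Θ) :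
    transportValue c (cycleShift g) = ∑ j, (c (g j) (g j) - c (g j) (g (j + 1))) := by
  simp only [transportValue, cycleShift, Finset.sum_mul, sub_mul]
  simp_rw [Finset.sum_comm (s := (univ : Finset Θ)) (t := (univ : Finset (Fin (J + 2))))]
  simp [Finset.sum_sub_distrib, ite_and]

theorem sum_cycleShift_diag [Fintype Θ] {g : Fin (J + 2) → Θ} (hg : Function.Injective g) :
    ∑ s, cycleShift g s s = J + 2 := by
  simp only [cycleShift]
  rw [Finset.sum_comm]
  have hne : ∀ j, g j ≠ g (j + 1) := fun j h => (add_ne_left.2 one_ne_zero) (hg h).symm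
  simp [ite_and, Finset.sum_sub_distrib, fun j => (hne j).symm]

theorem cycleShift_apply_left {g : Fin (J + 2) → Θ} (hg : Function.Injective g) (j : Fin (J + 2))
    (t : Θ) :
    cycleShift g (g j) t = (if g j = t then 1 else 0) - if g (j + 1) = t then 1 else 0 := by
  rw [cycleShift, Finset.sum_eq_single j]
  · simp
  · intro i _ hij
    simp [hg.ne hij]
  · simp

theorem cycleShift_eq_zero {g : Fin (J + 2) → Θ} {s : Θ} (hs : ∀ j, g j ≠ s) (t : Θ) :
    cycleShift g s t = 0 :=
  Finset.sum_eq_zero fun j _ => by simp [hs j]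

variable [Fintype Θ] {m q : Θ → ℝ} {γ c : Θ → Θ → ℝ}

theorem IsCoupling.exists_cycle_exchange (hc : DiagCyclicallyMonotone c) (hγ : IsCoupling m q γ)
    {g : Fin (J + 2) → Θ} (hg : Function.Injective g) (hpos : ∀ j, 0 < γ (g j) (g (j + 1))) :
    ∃ γ', IsCoupling m q γ' ∧ transportValue c γ ≤ transportValue c γ' ∧
      ∑ s, γ s s < ∑ s, γ' s s := by
  obtain ⟨j₀, -, hj₀⟩ := Finset.exists_min_image Finset.univ (fun j => γ (g j) (g (j + 1)))
    Finset.univ_nonempty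
  set ε := γ (g j₀) (g (j₀ + 1))
  have hε : 0 < ε := hpos j₀
  refine ⟨fun s t => γ s t + ε * cycleShift g s t, ⟨fun s t => ?_, fun s => ?_, fun t => ?_⟩,
    ?_, ?_⟩
  · by_cases hs : ∃ j, g j = s
    · obtain ⟨j, rfl⟩ := hs
      rw [cycleShift_apply_left hg]
      have hmoved : ε * (if g (j + 1) = t then 1 else 0) ≤ γ (g j) t := by
        split_ifs with ht
        · simpa [← ht] using hj₀ j (Finset.mem_univ _)
        · simpa using hγ.nonneg (g j) t
      have hadded : 0 ≤ ε * (if g j = t then 1 else 0) := by positivity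
      linarith [mul_sub ε (if g j = t then (1 : ℝ) else 0) (if g (j + 1) = t then 1 else 0)]
    · push Not at hs
      simpa [cycleShift_eq_zero hs] using hγ.nonneg s t
  · rw [Finset.sum_add_distrib, ← Finset.mul_sum, sum_cycleShift_row, mul_zero, add_zero,
      hγ.sum_row]
  · rw [Finset.sum_add_distrib, ← Finset.mul_sum, sum_cycleShift_col, mul_zero, add_zero,
      hγ.sum_col]
  · have hvalue : transportValue c (fun s t => γ s t + ε * cycleShift g s t) =
        transportValue c γ + ε * transportValue c (cycleShift g) := by
      simp only [transportValue, add_mul, Finset.sum_add_distrib, Finset.mul_sum, mul_assoc]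
    have hshift : 0 ≤ transportValue c (cycleShift g) := by
      rw [transportValue_cycleShift, Finset.sum_sub_distrib, sub_nonneg]
      exact hc J g hg
    rw [hvalue]
    nlinarith
  · rw [Finset.sum_add_distrib, ← Finset.mul_sum, sum_cycleShift_diag hg]
    have : (0 : ℝ) < ε * (J + 2) := by positivity
    linarith

end CycleExchange

section OptimalCoupling

variable {Θ : Type*} [Fintype Θ] [DecidableEq Θ] {m q : Θ → ℝ} {γ c : Θ → Θ → ℝ}

theorem IsCoupling.not_transGen_offDiag (hc : DiagCyclicallyMonotone c) (hγ : IsCoupling m q γ)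
    (hmax : ∀ γ', IsCoupling m q γ' → transportValue c γ ≤ transportValue c γ' →
      ∑ s, γ' s s ≤ ∑ s, γ s s) (a : Θ) :
    ¬ Relation.TransGen (fun s t => s ≠ t ∧ 0 < γ s t) a a := by
  intro ha
  obtain ⟨J, g, hg, hstep⟩ := ha.exists_injective_cycle fun s h => h.1 rfl
  obtain ⟨γ', hγ', hvalue, hdiag⟩ := hγ.exists_cycle_exchange hc hg fun j => (hstep j).2
  exact (hmax γ' hγ' hvalue).not_gt hdiag

theorem IsCoupling.one_sub_sum_diag_le (hγ : IsCoupling m q γ) (hm : ∑ s, m s = 1)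
    (hq : ∑ s, q s = 1) {ρ : Θ → ℕ} (hρ : ∀ s t, s ≠ t → 0 < γ s t → ρ s < ρ t)
    (hρN : ∀ s, ρ s < Fintype.card Θ) :
    1 - ∑ s, γ s s ≤ ((Fintype.card Θ : ℝ) - 1) * tv q m := by
  have hpoint : ∀ s t, γ s t ≤ γ s t * ((ρ t : ℝ) - ρ s) + if s = t then γ s t else 0 := by
    intro s t
    split_ifs with hst
    · simp [hst]
    · rcases (hγ.nonneg s t).eq_or_lt with h0 | h0
      · simp [← h0]
      · have : (ρ s : ℝ) + 1 ≤ ρ t := by exact_mod_cast hρ s t hst h0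
        nlinarith
  have hrise : ∑ s, ∑ t, γ s t * ((ρ t : ℝ) - ρ s) = ∑ s, (q s - m s) * ρ s := by
    simp only [mul_sub, Finset.sum_sub_distrib, sub_mul]
    rw [Finset.sum_comm (f := fun s t => γ s t * ρ t)]
    simp only [← Finset.sum_mul, hγ.sum_row, hγ.sum_col]
  have hmass : 1 ≤ ∑ s, (q s - m s) * ρ s + ∑ s, γ s s :=
    calc (1 : ℝ) = ∑ s, ∑ t, γ s t := by simp [hγ.sum_row, hm]
      _ ≤ ∑ s, ∑ t, (γ s t * ((ρ t : ℝ) - ρ s) + if s = t then γ s t else 0) :=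
        Finset.sum_le_sum fun s _ => Finset.sum_le_sum fun t _ => hpoint s t
      _ = _ := by simp [Finset.sum_add_distrib, hrise]
  have hrank : ∑ s, (q s - m s) * ρ s ≤
      ∑ s, max (q s - m s) 0 * ((Fintype.card Θ : ℝ) - 1) := by
    refine Finset.sum_le_sum fun s _ => ?_
    have hρs : (ρ s : ℝ) + 1 ≤ Fintype.card Θ := by exact_mod_cast hρN s
    have : (0 : ℝ) ≤ ρ s := Nat.cast_nonneg _
    rcases le_total 0 (q s - m s) with h | h
    · rw [max_eq_left h]; nlinarith
    · rw [max_eq_right h]; nlinarith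
  rw [tv_eq_sum_max_sub (hq.trans hm.symm), mul_comm, Finset.sum_mul]
  linarith

theorem exists_optimal_coupling_tv_bound (hc : DiagCyclicallyMonotone c) (hm : IsProbVec m)
    (hq : IsProbVec q) :
    ∃ γ, IsCoupling m q γ ∧
      (∀ γ', IsCoupling m q γ' → transportValue c γ' ≤ transportValue c γ) ∧
      1 - ∑ s, γ s s ≤ ((Fintype.card Θ : ℝ) - 1) * tv q m := by
  obtain ⟨γ, hγ, hopt, hlex⟩ := exists_isCoupling_isMaxOn_lex c hm hq
  obtain ⟨ρ, hρ, hρN⟩ := exists_rank_of_acyclic (hγ.not_transGen_offDiag hc hlex)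
  exact ⟨γ, hγ, hopt, hγ.one_sub_sum_diag_le hm.2 hq.2 (fun s t hst h => hρ s t ⟨hst, h⟩) hρN⟩

end OptimalCoupling

section Reports

variable {Θ X : Type*} [Fintype Θ] [Fintype X]

theorem ubar_liftSCF (u : X × Θ → ℝ) (x : Θ → X → ℝ) (p : Θ → ℝ) (θ : Θ) :
    ubar u (liftSCF x p) θ = ∑ t, p t * ubar u (x t) θ := by
  simp only [ubar, liftSCF, Finset.sum_mul, Finset.mul_sum, mul_assoc]
  exact Finset.sum_comm

theorem tv_liftSCF_le_sum {x : Θ → X → ℝ} {p : Θ → ℝ} (hp : IsProbVec p) (μ : X → ℝ) :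
    tv (liftSCF x p) μ ≤ ∑ t, p t * tv (x t) μ := by
  have hpoint : ∀ a, |liftSCF x p a - μ a| ≤ ∑ t, p t * |x t a - μ a| := by
    intro a
    have : liftSCF x p a - μ a = ∑ t, p t * (x t a - μ a) := by
      simp only [liftSCF, mul_sub, Finset.sum_sub_distrib, ← Finset.sum_mul, hp.2, one_mul]
    rw [this]
    refine (Finset.abs_sum_le_sum_abs _ _).trans_eq (Finset.sum_congr rfl fun t _ => ?_)
    rw [abs_mul, abs_of_nonneg (hp.1 t)]
  calc tv (liftSCF x p) μ ≤ (∑ a, ∑ t, p t * |x t a - μ a|) / 2 := by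
        rw [tv]
        gcongr with a
        exact hpoint a
    _ = ∑ t, p t * tv (x t) μ := by
        rw [Finset.sum_comm, Finset.sum_div]
        simp only [tv, mul_div_assoc', Finset.mul_sum]

theorem tv_liftSCF_le [DecidableEq Θ] {x : Θ → X → ℝ} (hx : ∀ θ, IsProbVec (x θ)) {p : Θ → ℝ}
    (hp : IsProbVec p) (θ : Θ) : tv (liftSCF x p) (x θ) ≤ 1 - p θ :=
  calc tv (liftSCF x p) (x θ) ≤ ∑ t, p t * tv (x t) (x θ) := tv_liftSCF_le_sum hp _
    _ ≤ ∑ t, p t * (1 - if t = θ then 1 else 0) := by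
        refine Finset.sum_le_sum fun t _ => mul_le_mul_of_nonneg_left ?_ (hp.1 t)
        split_ifs with ht
        · simp [ht, tv]
        · simpa using tv_le_one (hx t) (hx θ)
    _ = 1 - p θ := by simp [mul_sub, Finset.sum_sub_distrib, hp.2]

variable [DecidableEq Θ] {K : ℕ} {θv : Fin K → Θ} {q : Θ → ℝ}

noncomputable def jointReports (K : ℕ) (θv : Fin K → Θ) (r : Fin K → Θ → ℝ) (s t : Θ) : ℝ :=
  (∑ k with θv k = s, r k t) / K

noncomputable def condReports (K : ℕ) (θv : Fin K → Θ) (γ : Θ → Θ → ℝ) (k : Fin K) (t : Θ) :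
    ℝ :=
  γ (θv k) t / marg K θv (θv k)

theorem isProbVec_marg (hK : K ≠ 0) : IsProbVec (marg K θv) := by
  refine ⟨fun s => by unfold marg; positivity, ?_⟩
  simp only [marg, ← Finset.sum_div]
  rw [← Nat.cast_sum, Finset.sum_card_fiberwise_eq_card_filter]
  simp [hK]

theorem marg_pos (k : Fin K) : 0 < marg K θv (θv k) := by
  have : (0 : ℝ) < K := by exact_mod_cast k.pos
  exact div_pos (by exact_mod_cast Finset.card_pos.2 ⟨k, by simp⟩) this

theorem transportValue_jointReports (r : Fin K → Θ → ℝ) (c : Θ → Θ → ℝ) :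
    transportValue c (jointReports K θv r) = (∑ k, ∑ t, r k t * c (θv k) t) / K := by
  simp only [transportValue, jointReports, div_mul_eq_mul_div, ← Finset.sum_div, Finset.sum_mul]
  rw [← Finset.sum_fiberwise Finset.univ θv]
  refine congrArg (· / _) (Finset.sum_congr rfl fun s _ => ?_)
  rw [Finset.sum_comm]
  refine Finset.sum_congr rfl fun k hk => ?_
  rw [(Finset.mem_filter.1 hk).2]

theorem payoff_eq_transportValue (u : X × Θ → ℝ) (x : Θ → X → ℝ) (r : Fin K → Θ → ℝ) :
    payoff u x K θv r = transportValue (fun s t => ubar u (x t) s) (jointReports K θv r) := by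
  simp only [transportValue_jointReports, payoff, ubar_liftSCF]

theorem sum_jointReports_col (r : Fin K → Θ → ℝ) (t : Θ) :
    ∑ s, jointReports K θv r s t = (∑ k, r k t) / K := by
  simp only [jointReports, ← Finset.sum_div, Finset.sum_fiberwise]

theorem sum_jointReports_diag (r : Fin K → Θ → ℝ) :
    ∑ s, jointReports K θv r s s = (∑ k, r k (θv k)) / K := by
  simp only [jointReports, ← Finset.sum_div]
  rw [← Finset.sum_fiberwise Finset.univ θv]
  refine congrArg (· / _) (Finset.sum_congr rfl fun s _ => Finset.sum_congr rfl fun k hk => ?_)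
  rw [(Finset.mem_filter.1 hk).2]

theorem Feasible.isCoupling {r : Fin K → Θ → ℝ} (hr : Feasible K q r) :
    IsCoupling (marg K θv) q (jointReports K θv r) where
  nonneg s t := div_nonneg (Finset.sum_nonneg fun k _ => (hr.1 k).1 t) K.cast_nonneg
  sum_row s := by
    simp only [jointReports, ← Finset.sum_div]
    rw [Finset.sum_comm, Finset.sum_congr rfl fun k _ => (hr.1 k).2]
    simp [marg]
  sum_col t := (sum_jointReports_col r t).trans (hr.2 t)

theorem jointReports_condReports {γ : Θ → Θ → ℝ} (hγ : IsCoupling (marg K θv) q γ) :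
    jointReports K θv (condReports K θv γ) = γ := by
  ext s t
  have hfiber : ∀ k ∈ ({k | θv k = s} : Finset (Fin K)),
      condReports K θv γ k t = γ s t / marg K θv s :=
    fun k hk => by rw [condReports, (Finset.mem_filter.1 hk).2]
  rw [jointReports, Finset.sum_congr rfl hfiber, Finset.sum_const, nsmul_eq_mul]
  by_cases hs : marg K θv s = 0
  · simp [hγ.eq_zero_of_left_eq_zero hs]
  · obtain ⟨hcard, hK⟩ := div_ne_zero_iff.1 hs
    simp only [marg]
    field_simp

theorem feasible_condReports {γ : Θ → Θ → ℝ} (hγ : IsCoupling (marg K θv) q γ) :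
    Feasible K q (condReports K θv γ) := by
  refine ⟨fun k => ⟨fun t => div_nonneg (hγ.nonneg _ t) (marg_pos k).le, ?_⟩, fun t => ?_⟩
  · simp only [condReports, ← Finset.sum_div, hγ.sum_row, div_self (marg_pos k).ne']
  · rw [← sum_jointReports_col, jointReports_condReports hγ, hγ.sum_col]

end Reports

theorem quota_expost_bound_general {Θ X : Type*} [Fintype Θ] [Fintype X]
    [DecidableEq Θ]
    (u : X × Θ → ℝ) (x : Θ → X → ℝ) (hx : ∀ θ, IsProbVec (x θ))
    (hcm : CyclMonoSCF u x)
    (q : Θ → ℝ) (hq : IsProbVec q) (K : ℕ) (hK : 1 ≤ K) (θv : Fin K → Θ) :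
    ∃ r : Fin K → Θ → ℝ, Feasible K q r ∧
      (∀ r' : Fin K → Θ → ℝ, Feasible K q r' →
        payoff u x K θv r' ≤ payoff u x K θv r) ∧
      (∑ k, tv (liftSCF x (r k)) (x (θv k))) / K ≤
        ((Fintype.card Θ : ℝ) - 1) * tv q (marg K θv) := by
  have hK₀ : K ≠ 0 := by omega
  obtain ⟨γ, hγ, hopt, hbound⟩ := exists_optimal_coupling_tv_bound
    (c := fun s t => ubar u (x t) s) hcm (isProbVec_marg (θv := θv) hK₀) hq
  set r := condReports K θv γ
  have hr : Feasible K q r := feasible_condReports hγ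
  have hjoint : jointReports K θv r = γ := jointReports_condReports hγ
  refine ⟨r, hr, fun r' hr' => ?_, ?_⟩
  · rw [payoff_eq_transportValue, payoff_eq_transportValue, hjoint]
    exact hopt _ hr'.isCoupling
  calc (∑ k, tv (liftSCF x (r k)) (x (θv k))) / K ≤ (∑ k, (1 - r k (θv k))) / K := by
        gcongr with k
        exact tv_liftSCF_le hx (hr.1 k) _
    _ = 1 - ∑ s, γ s s := by
        rw [← hjoint, sum_jointReports_diag, Finset.sum_sub_distrib, sub_div]
        simp [hK₀]
    _ ≤ _ := hbound

/-- Ex-post error bound for the quota mechanism. If `x` is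
cyclically monotone, then for every quota `q` and type vector `θv` there is a
payoff-maximizing feasible report vector whose average decision error is at
most `(|Θ| − 1)·‖q − marg θv‖`. -/
theorem quota_expost_bound {Θ X : Type*} [Fintype Θ] [Fintype X]
    [Nonempty Θ] [Nonempty X] [DecidableEq Θ]
    (u : X × Θ → ℝ) (x : Θ → X → ℝ) (hx : ∀ θ, IsProbVec (x θ))
    (hcm : CyclMonoSCF u x)
    (q : Θ → ℝ) (hq : IsProbVec q) (K : ℕ) (hK : 1 ≤ K) (θv : Fin K → Θ) :
    ∃ r : Fin K → Θ → ℝ, Feasible K q r ∧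
      (∀ r' : Fin K → Θ → ℝ, Feasible K q r' →
        payoff u x K θv r' ≤ payoff u x K θv r) ∧
      (∑ k, tv (liftSCF x (r k)) (x (θv k))) / K ≤
        ((Fintype.card Θ : ℝ) - 1) * tv q (marg K θv) :=
  quota_expost_bound_general u x hx hcm q hq K hK θv
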